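/- arXiv:1907.09219 — 11 statements merged into one kernel-verified Lean document; each statement's English description precedes it below -/
import Mathlib

section
/- Let n ≥ 1, ε > 0, and let u, v : {0,1,...,n+1} → ℝ. Suppose that for every i with 1 ≤ i ≤ n we have min(u i - min(u (i-1), u (i+1)) - ε, u i - (u (i-1) + u (i+1))/2) ≤ 0 and min(v i - min(v (i-1), v (i+1)) - ε, v i - (v (i-1) + v (i+1))/2) ≥ 0. If u 0 ≤ v 0 and u (n+1) ≤ v (n+1), then u i ≤ v i for all 0 ≤ i ≤ n+1. -/
/-!
Let `w = u - v` and suppose its maximum `M` over `0, …, n+1` is positive; it is then attained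
first at an interior index `i₀`. Since `w` rises strictly into `i₀` and not out of it, the
supersolution must drop by at least `ε` from `i₀` to `i₀ + 1`. Such an `ε`-descent of `v`
propagates to the right (a supersolution cannot turn back up after an `ε`-drop), and along an
`ε`-descent of `v` the subsolution inequality forces `w` to be nondecreasing. Hence
`0 < M = w i₀ ≤ w (n+1) ≤ 0`.
-/

/-- `G^i[w] = tugOfWarOp ε (w (i-1)) (w i) (w (i+1))`. -/
noncomputable def tugOfWarOp (ε a b c : ℝ) : ℝ := min (b - min a c - ε) (b - (a + c) / 2)

section LocalSteps

variable {ε a b c a' b' c' : ℝ}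

theorem tugOfWarOp_comm : tugOfWarOp ε a b c = tugOfWarOp ε c b a := by
  simp only [tugOfWarOp, min_comm a c, add_comm a c]

theorem descent_of_nonneg_tugOfWarOp (hε : 0 < ε) (hv : 0 ≤ tugOfWarOp ε a b c)
    (hab : b + ε ≤ a) : c + ε ≤ b := by
  have hmin : min a c + ε ≤ b := by
    have := (le_min_iff.mp hv).1
    linarith
  rcases min_le_iff.mp (show min a c ≤ b - ε by linarith) with h | h <;> linarith

theorem sub_le_sub_of_descent (hu : tugOfWarOp ε a b c ≤ 0) (hv : 0 ≤ tugOfWarOp ε a' b' c')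
    (hleft : a - a' ≤ b - b') (hdesc : c' + ε ≤ b') : b - b' ≤ c - c' := by
  have hv_avg := (le_min_iff.mp hv).2
  rcases min_le_iff.mp hu with h | h
  · have := min_le_right a c
    linarith
  · linarith

theorem descent_of_strict_local_max (hu : tugOfWarOp ε a b c ≤ 0)
    (hv : 0 ≤ tugOfWarOp ε a' b' c') (hleft : a - a' < b - b') (hright : c - c' ≤ b - b') :
    c' + ε ≤ b' := by
  by_contra! hc
  have hmin : min a' c' + ε ≤ b' := by
    have := (le_min_iff.mp hv).1
    linarith
  have hdesc : a' + ε ≤ b' := by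
    rcases min_le_iff.mp (show min a' c' ≤ b' - ε by linarith) with h | h <;> linarith
  rw [tugOfWarOp_comm] at hu hv
  linarith [sub_le_sub_of_descent hu hv hright hdesc]

end LocalSteps

theorem exists_least_argmax_le (f : ℕ → ℝ) (N : ℕ) :
    ∃ i ≤ N, (∀ j ≤ N, f j ≤ f i) ∧ ∀ j < i, f j < f i := by
  classical
  have hmax : ∃ i, i ≤ N ∧ ∀ j ≤ N, f j ≤ f i := by
    obtain ⟨i, hi, hle⟩ := Finset.exists_max_image (Finset.range (N + 1)) f ⟨0, by simp⟩
    exact ⟨i, Nat.lt_succ_iff.mp (Finset.mem_range.mp hi),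
      fun j hj => hle j (Finset.mem_range.mpr (Nat.lt_succ_of_le hj))⟩
  obtain ⟨hiN, hi⟩ := Nat.find_spec hmax
  refine ⟨Nat.find hmax, hiN, hi, fun j hj => lt_of_not_ge fun hji => ?_⟩
  exact Nat.find_min hmax hj ⟨by omega, fun k hk => (hi k hk).trans hji⟩

theorem sub_le_sub_boundary_of_descent {n : ℕ} {ε : ℝ} (hε : 0 < ε) {u v : ℕ → ℝ}
    (hu : ∀ i, 1 ≤ i → i ≤ n → tugOfWarOp ε (u (i-1)) (u i) (u (i+1)) ≤ 0)
    (hv : ∀ i, 1 ≤ i → i ≤ n → 0 ≤ tugOfWarOp ε (v (i-1)) (v i) (v (i+1)))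
    {i : ℕ} (hi : 1 ≤ i) (hin : i ≤ n) (hleft : u (i-1) - v (i-1) ≤ u i - v i)
    (hdesc : v (i+1) + ε ≤ v i) : u i - v i ≤ u (n+1) - v (n+1) := by
  induction hk : n - i generalizing i with
  | zero =>
    obtain rfl : i = n := by omega
    exact sub_le_sub_of_descent (hu i hi le_rfl) (hv i hi le_rfl) hleft hdesc
  | succ k ih =>
    have hstep := sub_le_sub_of_descent (hu i hi hin) (hv i hi hin) hleft hdesc
    have hv' := hv (i+1) (by omega) (by omega)
    rw [Nat.add_sub_cancel] at hv'
    exact hstep.trans <| ih (by omega) (by omega) hstep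
      (descent_of_nonneg_tugOfWarOp hε hv' hdesc) (by omega)

theorem stmt_0_general (n : ℕ) (ε : ℝ) (hε : 0 < ε) (u v : ℕ → ℝ)
    (hu : ∀ i, 1 ≤ i → i ≤ n →
      min (u i - min (u (i-1)) (u (i+1)) - ε) (u i - (u (i-1) + u (i+1)) / 2) ≤ 0)
    (hv : ∀ i, 1 ≤ i → i ≤ n →
      0 ≤ min (v i - min (v (i-1)) (v (i+1)) - ε) (v i - (v (i-1) + v (i+1)) / 2))
    (h0 : u 0 ≤ v 0) (hN : u (n+1) ≤ v (n+1)) :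
    ∀ i ≤ n+1, u i ≤ v i := by
  by_contra! ⟨i₁, hi₁, hpos⟩
  obtain ⟨i₀, hi₀, hmax, hfirst⟩ := exists_least_argmax_le (fun i => u i - v i) (n+1)
  have hM : 0 < u i₀ - v i₀ := by linarith [hmax i₁ hi₁]
  have h1 : 1 ≤ i₀ := Nat.one_le_iff_ne_zero.mpr fun h => by subst h; linarith
  have hi₀n : i₀ ≤ n := Nat.le_of_lt_succ <| lt_of_le_of_ne hi₀ fun h => by subst h; linarith
  have hleft := hfirst (i₀ - 1) (by omega)
  have hdesc := descent_of_strict_local_max (hu i₀ h1 hi₀n) (hv i₀ h1 hi₀n) hleft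
    (hmax _ (by omega))
  have hreach := sub_le_sub_boundary_of_descent hε hu hv h1 hi₀n hleft.le hdesc
  linarith

theorem stmt_0 (n : ℕ) (hn : 1 ≤ n) (ε : ℝ) (hε : 0 < ε) (u v : ℕ → ℝ)
    (hu : ∀ i, 1 ≤ i → i ≤ n →
      min (u i - min (u (i-1)) (u (i+1)) - ε) (u i - (u (i-1) + u (i+1)) / 2) ≤ 0)
    (hv : ∀ i, 1 ≤ i → i ≤ n →
      0 ≤ min (v i - min (v (i-1)) (v (i+1)) - ε) (v i - (v (i-1) + v (i+1)) / 2))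
    (h0 : u 0 ≤ v 0) (hN : u (n+1) ≤ v (n+1)) :
    ∀ i ≤ n+1, u i ≤ v i :=
  stmt_0_general n ε hε u v hu hv h0 hN
end

section
/- Let n ≥ 1, ε > 0, and F₀, F_{n+1} ∈ ℝ. There is at most one function u : {0,1,...,n+1} → ℝ with u 0 = F₀, u (n+1) = F_{n+1}, and u i = max(min(u (i-1), u (i+1)) + ε, (u (i-1) + u (i+1))/2) for all 1 ≤ i ≤ n. -/
/-!
Comparison principle. If `u - v` is positive somewhere, look at its rightmost maximum `k + 1`.
There the DPP of `u` can match the DPP of `v` (translated by the maximum) only through the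
branch `min + ε` with the left neighbour as the minimum, so `u` and `v` both climb by exactly
`ε` into `k + 1`. For `ε > 0` a climb of `ε` into a node forces a climb of `ε` into its left
neighbour, so `u` and `v` both have slope `ε` on `[0, k + 1]`, and `u - v` takes the same
positive value at the boundary node `0`.
-/

/-- The right-hand side of the DPP. -/
noncomputable def tug (ε a b : ℝ) : ℝ := max (min a b + ε) ((a + b) / 2)

theorem tug_add_const (ε a b c : ℝ) : tug ε (a + c) (b + c) = tug ε a b + c := by
  simp only [tug, min_add_add_right, ← max_add_add_right]
  ring_nf

theorem tug_rigid {ε a b a₁ b₁ : ℝ} (ha : a ≤ a₁) (hb : b < b₁)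
    (h : tug ε a₁ b₁ ≤ tug ε a b) : a = a₁ ∧ tug ε a b = a + ε := by
  -- the average is strictly increasing in `b`, so it cannot be the active branch of `tug ε a b`
  have hmin : tug ε a b = min a b + ε := by
    refine (max_choice _ _).resolve_right fun havg => ?_
    have := le_max_right (min a₁ b₁ + ε) ((a₁ + b₁) / 2)
    unfold tug at h
    linarith
  have hle : min a₁ b₁ ≤ min a b := by
    have := le_max_left (min a₁ b₁ + ε) ((a₁ + b₁) / 2)
    rw [hmin] at h
    unfold tug at h
    linarith
  have hab : a ≤ b := by
    by_contra! hba
    rw [min_eq_right hba.le] at hle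
    exact (lt_min (hba.trans_le ha) hb).not_ge hle
  rw [min_eq_left hab] at hle hmin
  have ha₁ : a₁ ≤ a := by
    by_contra! h'
    exact (lt_min h' (hab.trans_lt hb)).not_ge hle
  exact ⟨le_antisymm ha ha₁, hmin⟩

theorem tug_eq_add_of_tug_add_eq {ε a b : ℝ} (hε : 0 < ε) (h : tug ε a b + ε = b) :
    tug ε a b = a + ε := by
  have hmin := le_max_left (min a b + ε) ((a + b) / 2)
  have havg := le_max_right (min a b + ε) ((a + b) / 2)
  unfold tug at *
  have hab : a < b := by
    by_contra! hba
    rw [min_eq_right hba] at hmin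
    linarith
  rw [min_eq_left hab.le] at *
  rcases max_choice (a + ε) ((a + b) / 2) with hmax | hmax
  · exact hmax
  · rw [hmax] at h ⊢
    linarith

theorem exists_rightmost_isMaxOn {α : Type*} [LinearOrder α] (f : ℕ → α) (N : ℕ) :
    ∃ i ≤ N, (∀ j ≤ N, f j ≤ f i) ∧ ∀ j ≤ N, i < j → f j < f i := by
  obtain ⟨i, hi, hmax⟩ :=
    (Finset.range (N + 1)).exists_max_image (fun j => toLex (f j, j)) ⟨0, by simp⟩
  have hlex (j) (hj : j ≤ N) : f j < f i ∨ f j = f i ∧ j ≤ i :=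
    Prod.Lex.toLex_le_toLex.1 (hmax j (by simpa [Nat.lt_succ_iff] using hj))
  refine ⟨i, by simpa [Nat.lt_succ_iff] using hi, fun j hj => ?_, fun j hj hij => ?_⟩
  · rcases hlex j hj with h | h
    exacts [h.le, h.1.le]
  · exact (hlex j hj).resolve_right fun h => (h.2.trans_lt hij).false

def IsTugSolution (n : ℕ) (ε : ℝ) (u : ℕ → ℝ) : Prop :=
  ∀ i, 1 ≤ i → i ≤ n → u i = tug ε (u (i - 1)) (u (i + 1))

namespace IsTugSolution

variable {n : ℕ} {ε : ℝ} {u v : ℕ → ℝ}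

theorem eq_tug_succ (hu : IsTugSolution n ε u) {k : ℕ} (hk : k + 1 ≤ n) :
    u (k + 1) = tug ε (u k) (u (k + 2)) :=
  hu (k + 1) k.succ_pos hk

theorem eq_add_mul_of_succ_eq_add (hu : IsTugSolution n ε u) (hε : 0 < ε) {k : ℕ} (hk : k ≤ n)
    (h : u (k + 1) = u k + ε) : u (k + 1) = u 0 + (k + 1) * ε := by
  induction k with
  | zero => simpa using h
  | succ k ih =>
    have hstep : u (k + 1) = u k + ε := by
      rw [hu.eq_tug_succ hk] at h ⊢
      exact tug_eq_add_of_tug_add_eq hε h.symm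
    rw [h, ih (by omega) hstep]
    push_cast
    ring

theorem le_of_boundary_le (hu : IsTugSolution n ε u) (hv : IsTugSolution n ε v) (hε : 0 < ε)
    (h0 : u 0 ≤ v 0) (hN : u (n + 1) ≤ v (n + 1)) : ∀ i ≤ n + 1, u i ≤ v i := by
  obtain ⟨i, hi, hmax, hrightmost⟩ := exists_rightmost_isMaxOn (fun j => u j - v j) (n + 1)
  suffices u i - v i ≤ 0 from fun j hj => by linarith [hmax j hj]
  by_contra! hpos
  obtain ⟨k, rfl⟩ : ∃ k, i = k + 1 := Nat.exists_eq_succ_of_ne_zero (by rintro rfl; linarith)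
  have hk : k + 1 ≤ n := by
    by_contra! hk
    obtain rfl : k = n := by omega
    linarith
  set M := u (k + 1) - v (k + 1) with hM
  have hleft : u k ≤ v k + M := by linarith [hmax k (by omega)]
  have hright : u (k + 2) < v (k + 2) + M := by linarith [hrightmost (k + 2) (by omega) (by omega)]
  obtain ⟨hu_left, hu_climb⟩ := tug_rigid hleft hright (by
    rw [tug_add_const, ← hv.eq_tug_succ hk, ← hu.eq_tug_succ hk]
    linarith)
  rw [← hu.eq_tug_succ hk] at hu_climb
  have hv_climb : v (k + 1) = v k + ε := by linarith
  have hu_lin := hu.eq_add_mul_of_succ_eq_add hε (Nat.le_of_succ_le hk) hu_climb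
  have hv_lin := hv.eq_add_mul_of_succ_eq_add hε (Nat.le_of_succ_le hk) hv_climb
  linarith

end IsTugSolution

theorem stmt_1_general (n : ℕ) (ε : ℝ) (hε : 0 < ε) (F0 FN : ℝ)
    (u v : ℕ → ℝ)
    (hu0 : u 0 = F0) (huN : u (n+1) = FN)
    (hu : ∀ i, 1 ≤ i → i ≤ n →
      u i = max (min (u (i-1)) (u (i+1)) + ε) ((u (i-1) + u (i+1)) / 2))
    (hv0 : v 0 = F0) (hvN : v (n+1) = FN)
    (hv : ∀ i, 1 ≤ i → i ≤ n →
      v i = max (min (v (i-1)) (v (i+1)) + ε) ((v (i-1) + v (i+1)) / 2)) :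
    ∀ i ≤ n+1, u i = v i := by
  have hu' : IsTugSolution n ε u := hu
  have hv' : IsTugSolution n ε v := hv
  intro i hi
  exact le_antisymm
    (hu'.le_of_boundary_le hv' hε (by rw [hu0, hv0]) (by rw [huN, hvN]) i hi)
    (hv'.le_of_boundary_le hu' hε (by rw [hu0, hv0]) (by rw [huN, hvN]) i hi)

theorem stmt_1 (n : ℕ) (hn : 1 ≤ n) (ε : ℝ) (hε : 0 < ε) (F0 FN : ℝ)
    (u v : ℕ → ℝ)
    (hu0 : u 0 = F0) (huN : u (n+1) = FN)
    (hu : ∀ i, 1 ≤ i → i ≤ n →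
      u i = max (min (u (i-1)) (u (i+1)) + ε) ((u (i-1) + u (i+1)) / 2))
    (hv0 : v 0 = F0) (hvN : v (n+1) = FN)
    (hv : ∀ i, 1 ≤ i → i ≤ n →
      v i = max (min (v (i-1)) (v (i+1)) + ε) ((v (i-1) + v (i+1)) / 2)) :
    ∀ i ≤ n+1, u i = v i :=
  stmt_1_general n ε hε F0 FN u v hu0 huN hu hv0 hvN hv
end

section
/- Let n ≥ 1, ε > 0, and K ≥ 0. If u : {0,1,...,n+1} → ℝ satisfies u i = max(min(u (i-1), u (i+1)) + ε, (u (i-1) + u (i+1))/2) for all 1 ≤ i ≤ n, and |u 0| ≤ K, |u (n+1)| ≤ K, then for every 0 ≤ i ≤ n+1, ε · min(n+1-i, i) - K ≤ u i ≤ ε · min(n+1-i, i) + K. -/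
/-!
A solution is concave (`u i` dominates the average of its neighbours), so its increments
`u (j+1) - u j` are nonincreasing. Where the first branch of the maximum is active, the increment
to the right is at least `-ε`; where the second is, both increments agree. Hence an increment
`≥ -ε` at the left end propagates all the way to the right, and then `u i ≤ u (n+1) + ε (n+1-i)`;
otherwise every increment is negative and `u i ≤ u 0`. Reflecting `i ↦ n+1-i` gives
`u i ≤ u 0 + ε i` as well.

For the lower bound, at every interior node either the left increment is `≥ ε` or the right one
is `≤ -ε`. By monotonicity of the increments, `u` either climbs by `ε` per step from `0` to `i`, or
descends by `ε` per step from `i` to `n+1`.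
-/

lemma sub_le_mul_of_forall_succ_sub_le {f : ℕ → ℝ} {c : ℝ} {a b : ℕ} (hab : a ≤ b)
    (h : ∀ j, a ≤ j → j < b → f (j + 1) - f j ≤ c) : f b - f a ≤ c * ((b : ℝ) - a) := by
  induction b, hab using Nat.le_induction with
  | base => simp
  | succ b hab ih =>
    have hstep := h b hab (Nat.lt_succ_self b)
    have ih := ih fun j hj hjb => h j hj (hjb.trans (Nat.lt_succ_self b))
    push_cast
    linarith

lemma mul_le_sub_of_forall_le_succ_sub {f : ℕ → ℝ} {c : ℝ} {a b : ℕ} (hab : a ≤ b)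
    (h : ∀ j, a ≤ j → j < b → c ≤ f (j + 1) - f j) : c * ((b : ℝ) - a) ≤ f b - f a := by
  have := sub_le_mul_of_forall_succ_sub_le (f := fun j => -f j) (c := -c) hab
    fun j hj hjb => by linarith [h j hj hjb]
  linarith

def IsDPPSolution (ε : ℝ) (n : ℕ) (u : ℕ → ℝ) : Prop :=
  ∀ i, 1 ≤ i → i ≤ n → u i = max (min (u (i - 1)) (u (i + 1)) + ε) ((u (i - 1) + u (i + 1)) / 2)

namespace IsDPPSolution

variable {ε K : ℝ} {n m i : ℕ} {u : ℕ → ℝ}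

lemma reflect (hu : IsDPPSolution ε n u) : IsDPPSolution ε n fun i => u (n + 1 - i) := by
  intro i hi1 hin
  dsimp only
  rw [show n + 1 - (i - 1) = n + 1 - i + 1 by omega, show n + 1 - (i + 1) = n + 1 - i - 1 by omega,
    hu (n + 1 - i) (by omega) (by omega), min_comm, add_comm (u (n + 1 - i + 1))]

lemma node (hu : IsDPPSolution ε n u) (hm : m + 1 ≤ n) :
    u (m + 1) = max (min (u m) (u (m + 2)) + ε) ((u m + u (m + 2)) / 2) :=
  hu (m + 1) (Nat.le_add_left 1 m) hm

lemma sub_succ_le_sub (hu : IsDPPSolution ε n u) (hm : m + 1 ≤ n) :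
    u (m + 2) - u (m + 1) ≤ u (m + 1) - u m := by
  have := (hu.node hm).symm ▸ le_max_right (min (u m) (u (m + 2)) + ε) ((u m + u (m + 2)) / 2)
  linarith

lemma le_sub_or_sub_succ_le (hu : IsDPPSolution ε n u) (hm : m + 1 ≤ n) :
    ε ≤ u (m + 1) - u m ∨ u (m + 2) - u (m + 1) ≤ -ε := by
  have := (hu.node hm).symm ▸ le_max_left (min (u m) (u (m + 2)) + ε) ((u m + u (m + 2)) / 2)
  rcases le_total (u m) (u (m + 2)) with h | h
  · left; rw [min_eq_left h] at this; linarith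
  · right; rw [min_eq_right h] at this; linarith

lemma neg_le_sub_succ (hu : IsDPPSolution ε n u) (hm : m + 1 ≤ n)
    (h : -ε ≤ u (m + 1) - u m) : -ε ≤ u (m + 2) - u (m + 1) := by
  rcases max_cases (min (u m) (u (m + 2)) + ε) ((u m + u (m + 2)) / 2) with ⟨hmax, -⟩ | ⟨hmax, -⟩
  · linarith [hu.node hm, min_le_right (u m) (u (m + 2))]
  · linarith [hu.node hm]

lemma sub_antitone (hu : IsDPPSolution ε n u) {a b : ℕ} (hab : a ≤ b) (hb : b ≤ n) :
    u (b + 1) - u b ≤ u (a + 1) - u a := by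
  induction b, hab using Nat.le_induction with
  | base => rfl
  | succ b _ ih => exact (hu.sub_succ_le_sub hb).trans (ih (by omega))

lemma neg_le_sub_of_neg_le_sub_zero (hu : IsDPPSolution ε n u) (h : -ε ≤ u 1 - u 0) :
    ∀ j ≤ n, -ε ≤ u (j + 1) - u j
  | 0, _ => h
  | j + 1, hj => hu.neg_le_sub_succ hj (hu.neg_le_sub_of_neg_le_sub_zero h j (by omega))

lemma le_mul_sub_add (hu : IsDPPSolution ε n u) (hε : 0 ≤ ε) (h0 : u 0 ≤ K)
    (hN : u (n + 1) ≤ K) (hi : i ≤ n + 1) : u i ≤ ε * ((n : ℝ) + 1 - i) + K := by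
  have hi' : (i : ℝ) ≤ n + 1 := by exact_mod_cast hi
  rcases le_or_gt (-ε) (u 1 - u 0) with hd0 | hd0
  · have := mul_le_sub_of_forall_le_succ_sub (f := u) hi fun j _ hj =>
      hu.neg_le_sub_of_neg_le_sub_zero hd0 j (by omega)
    push_cast at this
    linarith
  · have := sub_le_mul_of_forall_succ_sub_le (f := u) (c := 0) (Nat.zero_le i)
      fun j _ hj => by linarith [hu.sub_antitone (Nat.zero_le j) (by omega : j ≤ n)]
    linarith [mul_nonneg hε (sub_nonneg.mpr hi')]

lemma le_mul_add (hu : IsDPPSolution ε n u) (hε : 0 ≤ ε) (h0 : u 0 ≤ K)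
    (hN : u (n + 1) ≤ K) (hi : i ≤ n + 1) : u i ≤ ε * i + K := by
  have := hu.reflect.le_mul_sub_add hε (K := K) (i := n + 1 - i) (by simpa using hN)
    (by simpa using h0) (Nat.sub_le _ _)
  rwa [Nat.sub_sub_self hi, Nat.cast_sub hi, Nat.cast_add_one, sub_sub_cancel] at this

lemma mul_sub_le_or (hu : IsDPPSolution ε n u) (h0 : -K ≤ u 0) (hN : -K ≤ u (n + 1))
    (hi : i ≤ n + 1) : ε * i - K ≤ u i ∨ ε * ((n : ℝ) + 1 - i) - K ≤ u i := by
  by_cases hclimb : ∀ j < i, ε ≤ u (j + 1) - u j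
  · left
    have := mul_le_sub_of_forall_le_succ_sub (f := u) (Nat.zero_le i) fun j _ hj => hclimb j hj
    push_cast at this
    linarith
  · right
    push Not at hclimb
    obtain ⟨j, hji, hjε⟩ := hclimb
    have := sub_le_mul_of_forall_succ_sub_le (f := u) (c := -ε) hi fun l hil hl => by
      have hdrop := (hu.le_sub_or_sub_succ_le (m := j) (by omega)).resolve_left hjε.not_ge
      linarith [hu.sub_antitone (by omega : j + 1 ≤ l) (by omega : l ≤ n)]
    push_cast at this
    linarith

end IsDPPSolution

theorem stmt_2_general (n : ℕ) (ε : ℝ) (hε : 0 < ε) (K : ℝ)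
    (u : ℕ → ℝ)
    (hu : ∀ i, 1 ≤ i → i ≤ n →
      u i = max (min (u (i-1)) (u (i+1)) + ε) ((u (i-1) + u (i+1)) / 2))
    (h0 : |u 0| ≤ K) (hN : |u (n+1)| ≤ K) :
    ∀ i ≤ n+1,
      ε * min ((n:ℝ) + 1 - i) (i:ℝ) - K ≤ u i ∧
      u i ≤ ε * min ((n:ℝ) + 1 - i) (i:ℝ) + K := by
  intro i hi
  have hu : IsDPPSolution ε n u := hu
  obtain ⟨h0l, h0r⟩ := abs_le.mp h0
  obtain ⟨hNl, hNr⟩ := abs_le.mp hN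
  rw [mul_min_of_nonneg _ _ hε.le]
  constructor
  · rcases hu.mul_sub_le_or h0l hNl hi with h | h
    · linarith [min_le_right (ε * ((n : ℝ) + 1 - i)) (ε * i)]
    · linarith [min_le_left (ε * ((n : ℝ) + 1 - i)) (ε * i)]
  · rw [← min_add_add_right]
    exact le_min (hu.le_mul_sub_add hε.le h0r hNr hi) (hu.le_mul_add hε.le h0r hNr hi)

theorem stmt_2 (n : ℕ) (hn : 1 ≤ n) (ε : ℝ) (hε : 0 < ε) (K : ℝ) (hK : 0 ≤ K)
    (u : ℕ → ℝ)
    (hu : ∀ i, 1 ≤ i → i ≤ n →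
      u i = max (min (u (i-1)) (u (i+1)) + ε) ((u (i-1) + u (i+1)) / 2))
    (h0 : |u 0| ≤ K) (hN : |u (n+1)| ≤ K) :
    ∀ i ≤ n+1,
      ε * min ((n:ℝ) + 1 - i) (i:ℝ) - K ≤ u i ∧
      u i ≤ ε * min ((n:ℝ) + 1 - i) (i:ℝ) + K :=
  stmt_2_general n ε hε K u hu h0 hN
end

section
/- Let n ≥ 2, ε > 0, F₀ ≤ F_{n+1}, and set Q = (F_{n+1} - F₀)/ε. If Q > n+1, then the function u defined by u 0 = F₀, u (n+1) = F_{n+1}, and u i = ((n+1-i)/(n+1)) F₀ + (i/(n+1)) F_{n+1} for 1 ≤ i ≤ n satisfies u i = max(min(u (i-1), u (i+1)) + ε, (u (i-1)+u (i+1))/2) for all 1 ≤ i ≤ n. -/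
/-!
Writing `d = (F_{n+1} - F₀) / (n + 1)`, the interpolant is the arithmetic progression
`u j = F₀ + j d` on `0, …, n + 1`, so at every running node `u i` is the average of its neighbours
`u i ∓ d`, while the tug-of-war term is `u i - |d| + ε`. The hypothesis `Q > n + 1` says exactly
`ε < d`, so the average wins the maximum.
-/

section

variable {α : Type*} [Field α] [LinearOrder α] [IsStrictOrderedRing α]

theorem max_min_sub_add_add_midpoint_eq {x d ε : α} (h : ε ≤ |d|) :
    max (min (x - d) (x + d) + ε) ((x - d + (x + d)) / 2) = x := by
  have hmid : (x - d + (x + d)) / 2 = x := by ring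
  rw [hmid, max_eq_right]
  rcases abs_cases d with ⟨hd, hd0⟩ | ⟨hd, hd0⟩ <;> rw [hd] at h
  · rw [min_eq_left (by linarith)]; linarith
  · rw [min_eq_right (by linarith)]; linarith

end

theorem eq_add_mul_of_linear_interpolation {n : ℕ} {F0 FN : ℝ} {u : ℕ → ℝ}
    (hu0 : u 0 = F0) (huN : u (n + 1) = FN)
    (hudef : ∀ i, 1 ≤ i → i ≤ n →
      u i = (((n : ℝ) + 1 - i) / ((n : ℝ) + 1)) * F0 + ((i : ℝ) / ((n : ℝ) + 1)) * FN)
    {j : ℕ} (hj : j ≤ n + 1) : u j = F0 + j * ((FN - F0) / (n + 1)) := by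
  have hn1 : (n : ℝ) + 1 ≠ 0 := by positivity
  rcases Nat.eq_zero_or_pos j with rfl | hj0
  · simp [hu0]
  rcases hj.lt_or_eq with hjn | rfl
  · rw [hudef j hj0 (Nat.lt_succ_iff.mp hjn)]
    field_simp
    ring
  · rw [huN]
    push_cast
    field_simp
    ring

theorem stmt_4_general (n : ℕ) (ε : ℝ) (hε : 0 < ε) (F0 FN : ℝ)
    (hQ : (FN - F0) / ε > (n:ℝ) + 1)
    (u : ℕ → ℝ) (hu0 : u 0 = F0) (huN : u (n+1) = FN)
    (hudef : ∀ i, 1 ≤ i → i ≤ n →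
      u i = (((n:ℝ) + 1 - i) / ((n:ℝ) + 1)) * F0 + ((i:ℝ) / ((n:ℝ) + 1)) * FN) :
    ∀ i, 1 ≤ i → i ≤ n →
      u i = max (min (u (i-1)) (u (i+1)) + ε) ((u (i-1) + u (i+1)) / 2) := by
  intro i hi hin
  set d : ℝ := (FN - F0) / (n + 1)
  have hεd : ε ≤ |d| := by
    have hn1 : (0 : ℝ) < n + 1 := by positivity
    have : (n + 1) * ε < FN - F0 := by rwa [gt_iff_lt, lt_div_iff₀ hε] at hQ
    exact (le_div_iff₀' hn1).mpr this.le |>.trans (le_abs_self d)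
  have hu := fun j (hj : j ≤ n + 1) => eq_add_mul_of_linear_interpolation hu0 huN hudef hj
  have hprev : u (i - 1) = u i - d := by
    rw [hu _ (by omega), hu _ (by omega), Nat.cast_sub hi]; push_cast; ring
  have hnext : u (i + 1) = u i + d := by
    rw [hu _ (by omega), hu _ (by omega)]; push_cast; ring
  rw [hprev, hnext, max_min_sub_add_add_midpoint_eq hεd]

theorem stmt_4 (n : ℕ) (hn : 2 ≤ n) (ε : ℝ) (hε : 0 < ε) (F0 FN : ℝ) (hF : F0 ≤ FN)
    (hQ : (FN - F0) / ε > (n:ℝ) + 1)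
    (u : ℕ → ℝ) (hu0 : u 0 = F0) (huN : u (n+1) = FN)
    (hudef : ∀ i, 1 ≤ i → i ≤ n →
      u i = (((n:ℝ) + 1 - i) / ((n:ℝ) + 1)) * F0 + ((i:ℝ) / ((n:ℝ) + 1)) * FN) :
    ∀ i, 1 ≤ i → i ≤ n →
      u i = max (min (u (i-1)) (u (i+1)) + ε) ((u (i-1) + u (i+1)) / 2) :=
  stmt_4_general n ε hε F0 FN hQ u hu0 huN hudef
end

section
/- Let n ≥ 2, ε > 0, F₀ ≤ F_{n+1}, and set Q = (F_{n+1} - F₀)/ε. If n-1 < Q ≤ n+1, then the function u defined by u i = F₀ + i·ε for 0 ≤ i ≤ n and u (n+1) = F_{n+1} satisfies u i = max(min(u (i-1), u (i+1)) + ε, (u (i-1)+u (i+1))/2) for all 1 ≤ i ≤ n. -/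
/-! On `0, …, n` the function is affine with slope `ε`, so at every running node the
lower neighbour is the minimum and the maximum is attained by the tug-of-war term
`u (i - 1) + ε = u i`. The averaging term can only win at `i = n`, where `u (n + 1) = F_{n+1}`
breaks the affine pattern; `Q ≤ n + 1` is exactly what keeps it from doing so, and
`n - 1 < Q` keeps `u (n - 1)` the smaller neighbour. -/

theorem max_min_add_avg_eq {x y ε : ℝ} (hxy : x ≤ y) (hyx : y ≤ x + 2 * ε) :
    max (min x y + ε) ((x + y) / 2) = x + ε := by
  rw [min_eq_left hxy]
  exact max_eq_left (by linarith)

theorem stmt_5_general (n : ℕ) (ε : ℝ) (hε : 0 < ε) (F0 FN : ℝ)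
    (hQ1 : (n:ℝ) - 1 < (FN - F0) / ε) (hQ2 : (FN - F0) / ε ≤ (n:ℝ) + 1)
    (u : ℕ → ℝ) (hudef : ∀ i ≤ n, u i = F0 + (i:ℝ) * ε) (huN : u (n+1) = FN) :
    ∀ i, 1 ≤ i → i ≤ n →
      u i = max (min (u (i-1)) (u (i+1)) + ε) ((u (i-1) + u (i+1)) / 2) := by
  rintro i hi hin
  obtain ⟨k, rfl⟩ := Nat.exists_eq_add_of_le' hi
  have hk : u k = F0 + k * ε := hudef k (by omega)
  have hk_succ : u (k + 1) = u k + ε := by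
    rw [hudef _ hin, hk]; push_cast; ring
  have hbounds : u k ≤ u (k + 1 + 1) ∧ u (k + 1 + 1) ≤ u k + 2 * ε := by
    rcases (show k + 1 + 1 ≤ n ∨ k + 1 = n by omega) with hlt | rfl
    · rw [hudef _ hlt, hk]; push_cast
      constructor <;> linarith
    · rw [lt_div_iff₀ hε] at hQ1
      rw [div_le_iff₀ hε] at hQ2
      rw [huN, hk]; push_cast at hQ1 hQ2
      constructor <;> linarith
  rw [Nat.add_sub_cancel, max_min_add_avg_eq hbounds.1 hbounds.2, hk_succ]

theorem stmt_5 (n : ℕ) (hn : 2 ≤ n) (ε : ℝ) (hε : 0 < ε) (F0 FN : ℝ) (hF : F0 ≤ FN)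
    (hQ1 : (n:ℝ) - 1 < (FN - F0) / ε) (hQ2 : (FN - F0) / ε ≤ (n:ℝ) + 1)
    (u : ℕ → ℝ) (hudef : ∀ i ≤ n, u i = F0 + (i:ℝ) * ε) (huN : u (n+1) = FN) :
    ∀ i, 1 ≤ i → i ≤ n →
      u i = max (min (u (i-1)) (u (i+1)) + ε) ((u (i-1) + u (i+1)) / 2) :=
  stmt_5_general n ε hε F0 FN hQ1 hQ2 u hudef huN
end

section
/- Let n ≥ 2, ε > 0, F₀ ≤ F_{n+1}, and let k be an integer with 1 ≤ k ≤ n-1. Set Q = (F_{n+1} - F₀)/ε and suppose 2k - n - 1 < Q ≤ 2k - n + 1. Then the function u defined by u 0 = F₀, u (n+1) = F_{n+1}, u i = F₀ + i·ε for 1 ≤ i ≤ k, and u i = F_{n+1} + (n+1-i)·ε for k+1 ≤ i ≤ n, satisfies u i = max(min(u (i-1), u (i+1)) + ε, (u (i-1)+u (i+1))/2) for all 1 ≤ i ≤ n. -/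
/-!
At every running node the double ramp takes the value `min (u (i-1)) (u (i+1)) + ε`, and the two
neighbours differ by at most `2ε`, so the averaging term `(u (i-1) + u (i+1)) / 2` never exceeds the
first one. Away from the kink the neighbours differ by exactly `2ε`; at the nodes `k` and `k + 1`
they differ by `(FN - F0) - (2k - n - 1) ε` and `(2k - n + 1) ε - (FN - F0)`, both of which lie in
`[0, 2ε]` precisely when `2k - n - 1 ≤ Q ≤ 2k - n + 1`.
-/

lemma eq_max_min_add_midpoint_of_le {a b c ε : ℝ} (hac : a ≤ c) (hca : c ≤ a + 2 * ε)
    (hb : b = a + ε) : b = max (min a c + ε) ((a + c) / 2) := by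
  rw [min_eq_left hac, max_eq_left (by linarith), hb]

lemma eq_max_min_add_midpoint_of_ge {a b c ε : ℝ} (hca : c ≤ a) (hac : a ≤ c + 2 * ε)
    (hb : b = c + ε) : b = max (min a c + ε) ((a + c) / 2) := by
  rw [min_comm, add_comm a]
  exact eq_max_min_add_midpoint_of_le hca hac hb

theorem stmt_6_general (n : ℕ) (ε : ℝ) (hε : 0 < ε) (F0 FN : ℝ)
    (k : ℕ) (hk2 : k ≤ n - 1)
    (hQ1 : 2 * (k:ℝ) - n - 1 < (FN - F0) / ε) (hQ2 : (FN - F0) / ε ≤ 2 * (k:ℝ) - n + 1)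
    (u : ℕ → ℝ) (hu0 : u 0 = F0) (huN : u (n+1) = FN)
    (hudef1 : ∀ i, 1 ≤ i → i ≤ k → u i = F0 + (i:ℝ) * ε)
    (hudef2 : ∀ i, k + 1 ≤ i → i ≤ n → u i = FN + ((n:ℝ) + 1 - i) * ε) :
    ∀ i, 1 ≤ i → i ≤ n →
      u i = max (min (u (i-1)) (u (i+1)) + ε) ((u (i-1) + u (i+1)) / 2) := by
  have hlow : (2 * (k:ℝ) - n - 1) * ε ≤ FN - F0 := ((lt_div_iff₀ hε).mp hQ1).le
  have hup : FN - F0 ≤ (2 * (k:ℝ) - n + 1) * ε := (div_le_iff₀ hε).mp hQ2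
  have hasc : ∀ j ≤ k, u j = F0 + (j:ℝ) * ε := by
    rintro (_ | j) hj
    · simp [hu0]
    · exact hudef1 _ (by omega) hj
  have hdesc : ∀ j, k + 1 ≤ j → j ≤ n + 1 → u j = FN + ((n:ℝ) + 1 - j) * ε := by
    intro j hkj hjn
    rcases hjn.lt_or_eq with hjn | rfl
    · exact hudef2 j hkj (by omega)
    · simp [huN]
  rintro _ hi hin
  obtain ⟨j, rfl⟩ : ∃ j, _ = j + 1 := ⟨_, (Nat.sub_add_cancel hi).symm⟩
  rw [Nat.add_sub_cancel]
  rcases (by omega : j + 2 ≤ k ∨ j + 1 = k ∨ j = k ∨ k + 1 ≤ j) with h | rfl | rfl | h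
  · rw [hasc j (by omega), hasc (j + 1) (by omega), hasc (j + 1 + 1) h]
    apply eq_max_min_add_midpoint_of_le <;> push_cast <;> linarith
  · rw [hasc j (by omega), hasc (j + 1) le_rfl, hdesc (j + 1 + 1) le_rfl (by omega)]
    push_cast at hlow hup
    apply eq_max_min_add_midpoint_of_le <;> push_cast <;> linarith
  · rw [hasc j le_rfl, hdesc (j + 1) le_rfl (by omega), hdesc (j + 1 + 1) (by omega) (by omega)]
    apply eq_max_min_add_midpoint_of_ge <;> push_cast <;> linarith
  · rw [hdesc j h (by omega), hdesc (j + 1) (by omega) (by omega),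
      hdesc (j + 1 + 1) (by omega) (by omega)]
    apply eq_max_min_add_midpoint_of_ge <;> push_cast <;> linarith

theorem stmt_6 (n : ℕ) (hn : 2 ≤ n) (ε : ℝ) (hε : 0 < ε) (F0 FN : ℝ) (hF : F0 ≤ FN)
    (k : ℕ) (hk1 : 1 ≤ k) (hk2 : k ≤ n - 1)
    (hQ1 : 2 * (k:ℝ) - n - 1 < (FN - F0) / ε) (hQ2 : (FN - F0) / ε ≤ 2 * (k:ℝ) - n + 1)
    (u : ℕ → ℝ) (hu0 : u 0 = F0) (huN : u (n+1) = FN)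
    (hudef1 : ∀ i, 1 ≤ i → i ≤ k → u i = F0 + (i:ℝ) * ε)
    (hudef2 : ∀ i, k + 1 ≤ i → i ≤ n → u i = FN + ((n:ℝ) + 1 - i) * ε) :
    ∀ i, 1 ≤ i → i ≤ n →
      u i = max (min (u (i-1)) (u (i+1)) + ε) ((u (i-1) + u (i+1)) / 2) :=
  stmt_6_general n ε hε F0 FN k hk2 hQ1 hQ2 u hu0 huN hudef1 hudef2
end

section
/- Let n ≥ 2, ε > 0, F₀ ≤ F_{n+1}, Q = (F_{n+1}-F₀)/ε, and suppose Q > n+1. Then for every k with 1 ≤ k ≤ n-1 and every pair of integers j₁, j₂ with 0 ≤ j₁ < j₂ ≤ n+1, there is exactly one function u : {0,...,n+1} → ℝ with u 0 = F₀, u (n+1) = F_{n+1} solving the DPP u i = max(min(u (i-1), u (i+1)) + ε, (u (i-1)+u (i+1))/2) for all 1 ≤ i ≤ n, and it is given by u i = ((n+1-i)/(n+1)) F₀ + (i/(n+1)) F_{n+1}. -/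
/-!
A solution of the DPP lies above the average of its neighbours, so its increments
`u (i+1) - u i` are nonincreasing; since they sum to `u (n+1) - u 0 > (n+1) ε`, the first one
exceeds `ε`. Wherever the maximum in the DPP is attained by `min (u (i-1)) (u (i+1)) + ε`, the
increment entering `i` is at most `ε`; so, starting from the first increment, the maximum is
always attained by the average and all increments are equal: `u` is affine.
-/

def SolvesDPP (ε : ℝ) (n : ℕ) (u : ℕ → ℝ) : Prop :=
  ∀ i, 1 ≤ i → i ≤ n → u i = max (min (u (i-1)) (u (i+1)) + ε) ((u (i-1) + u (i+1)) / 2)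

theorem solvesDPP_affine {ε d : ℝ} (n : ℕ) (a : ℝ) (h : ε ≤ |d|) :
    SolvesDPP ε n (fun i => a + i * d) := by
  intro i hi _
  simp only [Nat.cast_sub hi, Nat.cast_add, Nat.cast_one]
  rw [max_eq_right]
  · ring
  rcases le_total 0 d with hd | hd
  · rw [abs_of_nonneg hd] at h
    linarith [min_le_left (a + (i - 1 : ℝ) * d) (a + (i + 1) * d)]
  · rw [abs_of_nonpos hd] at h
    linarith [min_le_right (a + (i - 1 : ℝ) * d) (a + (i + 1) * d)]

namespace SolvesDPP

variable {ε : ℝ} {n : ℕ} {u : ℕ → ℝ}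

theorem apply_succ (hu : SolvesDPP ε n u) {i : ℕ} (hi : i < n) :
    u (i+1) = max (min (u i) (u (i+2)) + ε) ((u i + u (i+2)) / 2) := by
  simpa using hu (i+1) (by omega) (by omega)

theorem increment_succ_le (hu : SolvesDPP ε n u) {i : ℕ} (hi : i < n) :
    u (i+2) - u (i+1) ≤ u (i+1) - u i := by
  have := (hu.apply_succ hi).ge.trans' (le_max_right _ _)
  linarith

theorem increment_succ_eq_or_le (hu : SolvesDPP ε n u) {i : ℕ} (hi : i < n) :
    u (i+2) - u (i+1) = u (i+1) - u i ∨ u (i+1) - u i ≤ ε := by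
  have h := hu.apply_succ hi
  rcases max_choice (min (u i) (u (i+2)) + ε) ((u i + u (i+2)) / 2) with hmax | hmax
  · right
    rcases min_choice (u i) (u (i+2)) with hmin | hmin <;> rw [hmax, hmin] at h
    · linarith
    · have := min_le_left (u i) (u (i+2))
      linarith
  · left
    rw [hmax] at h
    linarith

theorem increment_le_increment_zero (hu : SolvesDPP ε n u) {k : ℕ} (hk : k ≤ n) :
    u (k+1) - u k ≤ u 1 - u 0 := by
  induction k with
  | zero => rfl
  | succ k ih => exact (hu.increment_succ_le hk).trans (ih (by omega))

theorem lt_increment_zero (hu : SolvesDPP ε n u) (hgap : (n + 1) * ε < u (n+1) - u 0) :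
    ε < u 1 - u 0 := by
  have hsum : u (n+1) - u 0 ≤ (n + 1) * (u 1 - u 0) := by
    rw [← Finset.sum_range_sub]
    simpa using Finset.sum_le_card_nsmul (Finset.range (n+1)) (fun k => u (k+1) - u k) _
      fun k hk => hu.increment_le_increment_zero (Nat.lt_succ_iff.mp (Finset.mem_range.mp hk))
  nlinarith

theorem increment_eq_increment_zero (hu : SolvesDPP ε n u) (hgap : (n + 1) * ε < u (n+1) - u 0)
    {k : ℕ} (hk : k ≤ n) : u (k+1) - u k = u 1 - u 0 := by
  induction k with
  | zero => rfl
  | succ k ih =>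
    have ih := ih (by omega)
    have := hu.lt_increment_zero hgap
    exact (hu.increment_succ_eq_or_le hk).resolve_right (by linarith) |>.trans ih

theorem eq_affine (hu : SolvesDPP ε n u) (hgap : (n + 1) * ε < u (n+1) - u 0)
    {i : ℕ} (hi : i ≤ n + 1) : u i = u 0 + i * ((u (n+1) - u 0) / (n + 1)) := by
  have hlin : ∀ k ≤ n + 1, u k = u 0 + k * (u 1 - u 0) := by
    intro k hk
    induction k with
    | zero => simp
    | succ k ih =>
      rw [← sub_add_cancel (u (k+1)) (u k), hu.increment_eq_increment_zero hgap (by omega),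
        ih (by omega)]
      push_cast
      ring
  have hslope : (u (n+1) - u 0) / (n + 1) = u 1 - u 0 := by
    rw [hlin (n+1) le_rfl]
    field_simp
    push_cast
    ring
  rw [hslope, hlin i hi]

end SolvesDPP

theorem stmt_7_general (n : ℕ) (ε : ℝ) (hε : 0 < ε) (F0 FN : ℝ)
    (hQ : (FN - F0) / ε > (n:ℝ) + 1) :
    ∀ k : ℕ, 1 ≤ k → k ≤ n - 1 → ∀ j₁ j₂ : ℕ, j₁ < j₂ → j₂ ≤ n + 1 →
      (∃ u : ℕ → ℝ, u 0 = F0 ∧ u (n+1) = FN ∧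
        (∀ i, 1 ≤ i → i ≤ n →
          u i = max (min (u (i-1)) (u (i+1)) + ε) ((u (i-1) + u (i+1)) / 2))) ∧
      (∀ u : ℕ → ℝ, u 0 = F0 → u (n+1) = FN →
        (∀ i, 1 ≤ i → i ≤ n →
          u i = max (min (u (i-1)) (u (i+1)) + ε) ((u (i-1) + u (i+1)) / 2)) →
        ∀ i ≤ n + 1,
          u i = (((n:ℝ) + 1 - i) / ((n:ℝ) + 1)) * F0 + ((i:ℝ) / ((n:ℝ) + 1)) * FN) := by
  intro _ _ _ _ _ _ _
  have hgap : ((n:ℝ) + 1) * ε < FN - F0 := by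
    rw [gt_iff_lt, lt_div_iff₀ hε] at hQ
    linarith
  have hslope : ε < (FN - F0) / (n + 1) := by
    rwa [lt_div_iff₀ (by positivity), mul_comm]
  refine ⟨⟨fun i => F0 + i * ((FN - F0) / (n + 1)), by simp, ?_,
    solvesDPP_affine n F0 (hslope.le.trans (le_abs_self _))⟩, ?_⟩
  · push_cast
    field_simp
    ring
  · intro u h0 hN hu i hi
    rw [SolvesDPP.eq_affine hu (by rwa [h0, hN]) hi, h0, hN]
    field_simp
    ring

theorem stmt_7 (n : ℕ) (hn : 2 ≤ n) (ε : ℝ) (hε : 0 < ε) (F0 FN : ℝ) (hF : F0 ≤ FN)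
    (hQ : (FN - F0) / ε > (n:ℝ) + 1) :
    ∀ k : ℕ, 1 ≤ k → k ≤ n - 1 → ∀ j₁ j₂ : ℕ, j₁ < j₂ → j₂ ≤ n + 1 →
      (∃ u : ℕ → ℝ, u 0 = F0 ∧ u (n+1) = FN ∧
        (∀ i, 1 ≤ i → i ≤ n →
          u i = max (min (u (i-1)) (u (i+1)) + ε) ((u (i-1) + u (i+1)) / 2))) ∧
      (∀ u : ℕ → ℝ, u 0 = F0 → u (n+1) = FN →
        (∀ i, 1 ≤ i → i ≤ n →
          u i = max (min (u (i-1)) (u (i+1)) + ε) ((u (i-1) + u (i+1)) / 2)) →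
        ∀ i ≤ n + 1,
          u i = (((n:ℝ) + 1 - i) / ((n:ℝ) + 1)) * F0 + ((i:ℝ) / ((n:ℝ) + 1)) * FN) :=
  stmt_7_general n ε hε F0 FN hQ
end

section
/- Let n ≥ 1, ε > 0, and let v : {0,...,n+1} → ℝ satisfy, for all 1 ≤ i ≤ n, min(max(v i - v (i-1), v i - v (i+1)) - ε, (v i - v (i-1)) + (v i - v (i+1))) ≥ 0. Set C = max over 0 ≤ i ≤ n+1 of |v i| (assume C > 0), fix δ > 0 with δ ≤ 1, and define ṽ i = (1+δ)·v i - (δ/(4C))·(v i)². Then for all 1 ≤ i ≤ n, max(ṽ i - ṽ (i-1), ṽ i - ṽ (i+1)) ≥ ε + (δ/2)·ε and (ṽ i - ṽ (i-1)) + (ṽ i - ṽ (i+1)) ≥ (δ/(4C))·ε². -/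
/-!
With `g α = (1 + δ) α - k α²`, `0 ≤ k` and `4 k C ≤ δ`, the slope of `g` is at least `1 + δ/2`
on `(-∞, C]`, so every nonnegative one-sided difference of `v` ending at a point `x ≤ C` is
multiplied by at least `1 + δ/2`. For the discrete Laplacian, with `a, b` the two one-sided
differences at `x`, concavity of `g` contributes the extra term `k (a² + b²)`, which is at least
`k ε²` because one of `a, b` is at least `ε`.
-/

def quadraticTransform (δ k α : ℝ) : ℝ := (1 + δ) * α - k * α ^ 2

section

variable {δ k C x y z : ℝ}

local notation "g" => quadraticTransform δ k

lemma quadraticTransform_sub (x y : ℝ) : g x - g y = (x - y) * (1 + δ - k * (x + y)) := by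
  unfold quadraticTransform; ring

lemma quadraticTransform_second_diff (x y z : ℝ) :
    (g x - g y) + (g x - g z) =
      ((x - y) + (x - z)) * (1 + δ - 2 * k * x) + k * ((x - y) ^ 2 + (x - z) ^ 2) := by
  unfold quadraticTransform; ring

lemma one_add_half_mul_le_quadraticTransform_sub (hk : 0 ≤ k) (hkC : 4 * k * C ≤ δ)
    (hx : x ≤ C) (hxy : 0 ≤ x - y) :
    (1 + δ / 2) * (x - y) ≤ g x - g y := by
  have hsum : k * (x + y) ≤ δ / 2 := by
    nlinarith [mul_le_mul_of_nonneg_left (by linarith : x + y ≤ 2 * C) hk]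
  rw [quadraticTransform_sub, mul_comm]
  exact mul_le_mul_of_nonneg_left (by linarith) hxy

lemma one_add_half_mul_le_max_quadraticTransform_sub {ε : ℝ} (hδ : 0 ≤ δ) (hk : 0 ≤ k)
    (hkC : 4 * k * C ≤ δ) (hx : x ≤ C) (hε : 0 ≤ ε) (hmax : ε ≤ max (x - y) (x - z)) :
    (1 + δ / 2) * ε ≤ max (g x - g y) (g x - g z) := by
  rcases le_max_iff.mp hmax with h | h
  · exact le_max_of_le_left <| (mul_le_mul_of_nonneg_left h (by positivity)).trans
      (one_add_half_mul_le_quadraticTransform_sub hk hkC hx (hε.trans h))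
  · exact le_max_of_le_right <| (mul_le_mul_of_nonneg_left h (by positivity)).trans
      (one_add_half_mul_le_quadraticTransform_sub hk hkC hx (hε.trans h))

lemma sq_le_sq_add_sq_of_le_max {ε a b : ℝ} (hε : 0 ≤ ε) (h : ε ≤ max a b) :
    ε ^ 2 ≤ a ^ 2 + b ^ 2 := by
  rcases le_max_iff.mp h with h | h <;> nlinarith [sq_nonneg a, sq_nonneg b]

lemma mul_sq_le_quadraticTransform_second_diff {ε : ℝ} (hδ : 0 ≤ δ) (hk : 0 ≤ k)
    (hkC : 4 * k * C ≤ δ) (hx : x ≤ C) (hε : 0 ≤ ε) (hmax : ε ≤ max (x - y) (x - z))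
    (hlap : 0 ≤ (x - y) + (x - z)) :
    k * ε ^ 2 ≤ (g x - g y) + (g x - g z) := by
  have hfactor : 0 ≤ 1 + δ - 2 * k * x := by
    nlinarith [mul_le_mul_of_nonneg_left hx hk]
  rw [quadraticTransform_second_diff]
  nlinarith [mul_nonneg hlap hfactor,
    mul_le_mul_of_nonneg_left (sq_le_sq_add_sq_of_le_max hε hmax) hk]

end

theorem stmt_8 (n : ℕ) (ε : ℝ) (hε : 0 < ε) (v : ℕ → ℝ)
    (hv : ∀ i, 1 ≤ i → i ≤ n →
      0 ≤ min (max (v i - v (i-1)) (v i - v (i+1)) - ε)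
              ((v i - v (i-1)) + (v i - v (i+1))))
    (C : ℝ)
    (hCdef : C = (Finset.range (n+2)).sup'
      (by simp : (Finset.range (n+2)).Nonempty) (fun i => |v i|))
    (hC : 0 < C)
    (δ : ℝ) (hδ : 0 < δ)
    (w : ℕ → ℝ) (hwdef : ∀ i, w i = (1 + δ) * v i - (δ / (4 * C)) * (v i)^2) :
    ∀ i, 1 ≤ i → i ≤ n →
      max (w i - w (i-1)) (w i - w (i+1)) ≥ ε + (δ / 2) * ε ∧
      (w i - w (i-1)) + (w i - w (i+1)) ≥ (δ / (4 * C)) * ε^2 := by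
  intro i hi hin
  have hvi : v i ≤ C := (le_abs_self _).trans <|
    hCdef ▸ Finset.le_sup' (fun i => |v i|) (Finset.mem_range.mpr (by omega))
  have hk : 0 ≤ δ / (4 * C) := by positivity
  have hkC : 4 * (δ / (4 * C)) * C ≤ δ := le_of_eq (by field_simp)
  obtain ⟨hmax, hlap⟩ := le_min_iff.mp (hv i hi hin)
  have hw : w = fun j => quadraticTransform δ (δ / (4 * C)) (v j) := funext hwdef
  subst hw
  constructor
  · rw [ge_iff_le, show ε + δ / 2 * ε = (1 + δ / 2) * ε by ring]
    exact one_add_half_mul_le_max_quadraticTransform_sub hδ.le hk hkC hvi hε.le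
      (sub_nonneg.mp hmax)
  · exact mul_sq_le_quadraticTransform_second_diff hδ.le hk hkC hvi hε.le
      (sub_nonneg.mp hmax) hlap
end

section
/- Let ε > 0, λ₀, λ₁ ∈ ℝ with F₀ ≤ F_{n+1}, n ≥ 2, j₁ and j₂ integers with 0 ≤ j₁ < j₂ ≤ n+1 and j₂ - j₁ ≥ 2, and define u : {0,...,n+1} → ℝ by u i = F₀ + iε for 0 ≤ i ≤ j₁, u i = ((j₂ - i)/(j₂ - j₁))(F₀ + j₁ ε) + ((i - j₁)/(j₂ - j₁))(F_{n+1} + (n+1-j₂)ε) for j₁ < i < j₂, and u i = F_{n+1} + (n+1-i)ε for j₂ ≤ i ≤ n+1. Then u satisfies the DPP u i = max(min(u (i-1), u (i+1)) + ε, (u (i-1)+u (i+1))/2) for all i with j₁+1 ≤ i ≤ j₂-1 if and only if |F_{n+1} - F₀ + (n+1-j₁-j₂)ε| ≥ ε(j₂ - j₁), i.e. (F_{n+1}-F₀)/ε ≤ 2j₁ - (n+1) or (F_{n+1}-F₀)/ε ≥ 2j₂ - (n+1). -/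
/-!
On the Tug-of-War region `u` is the linear interpolation between `u j₁` and `u j₂`, so at
an interior node the neighbours are `u i ∓ s` for the slope `s`. Then the average term of the
DPP is `u i` and the min-term is `u i - |s| + ε`, so the DPP holds iff `ε ≤ |s|`, independently
of the node.
-/

theorem max_min_add_midpoint_eq_iff (a s ε : ℝ) :
    a = max (min (a - s) (a + s) + ε) ((a - s + (a + s)) / 2) ↔ ε ≤ |s| := by
  have hmin : min (a - s) (a + s) = a - |s| := by
    rw [← sub_neg_eq_add a s, min_sub_sub_left, abs_eq_max_neg]
  rw [hmin, show (a - s + (a + s)) / 2 = a by ring, eq_comm, max_eq_right_iff]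
  constructor <;> intro h <;> linarith

theorem eq_add_mul_div_of_linear_interp {j₁ j₂ : ℕ} (hj : j₁ < j₂) {A B : ℝ} {u : ℕ → ℝ}
    (hu₁ : u j₁ = A)
    (hu : ∀ i, j₁ < i → i < j₂ →
      u i = (((j₂ : ℝ) - i) / ((j₂ : ℝ) - j₁)) * A + (((i : ℝ) - j₁) / ((j₂ : ℝ) - j₁)) * B)
    (hu₂ : u j₂ = B) {k : ℕ} (hk₁ : j₁ ≤ k) (hk₂ : k ≤ j₂) :
    u k = A + ((k : ℝ) - j₁) * ((B - A) / ((j₂ : ℝ) - j₁)) := by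
  have hd : (j₂ : ℝ) - j₁ ≠ 0 := sub_ne_zero.2 (by exact_mod_cast hj.ne')
  rcases hk₁.eq_or_lt with rfl | hk₁
  · simp [hu₁]
  rcases hk₂.eq_or_lt with rfl | hk₂
  · rw [hu₂]; field_simp; ring
  · rw [hu k hk₁ hk₂]; field_simp; ring

theorem stmt_13_general (n : ℕ) (ε : ℝ) (F0 FN : ℝ)
    (j₁ j₂ : ℕ) (hj2 : j₂ ≤ n + 1) (hgap : j₁ + 2 ≤ j₂)
    (u : ℕ → ℝ)
    (hu1 : ∀ i ≤ j₁, u i = F0 + (i:ℝ) * ε)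
    (hu2 : ∀ i, j₁ < i → i < j₂ →
      u i = (((j₂:ℝ) - i) / ((j₂:ℝ) - j₁)) * (F0 + (j₁:ℝ) * ε)
          + (((i:ℝ) - j₁) / ((j₂:ℝ) - j₁)) * (FN + ((n:ℝ) + 1 - j₂) * ε))
    (hu3 : ∀ i, j₂ ≤ i → i ≤ n + 1 → u i = FN + ((n:ℝ) + 1 - i) * ε) :
    (∀ i, j₁ + 1 ≤ i → i ≤ j₂ - 1 →
      u i = max (min (u (i-1)) (u (i+1)) + ε) ((u (i-1) + u (i+1)) / 2))
    ↔ ε * ((j₂:ℝ) - j₁) ≤ |FN - F0 + ((n:ℝ) + 1 - j₁ - j₂) * ε| := by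
  set s := (FN + ((n : ℝ) + 1 - j₂) * ε - (F0 + j₁ * ε)) / ((j₂ : ℝ) - j₁)
  have hlin {k : ℕ} (hk₁ : j₁ ≤ k) (hk₂ : k ≤ j₂) : u k = F0 + j₁ * ε + ((k : ℝ) - j₁) * s :=
    eq_add_mul_div_of_linear_interp (by omega) (hu1 j₁ le_rfl) hu2 (hu3 j₂ le_rfl hj2) hk₁ hk₂
  have hnode {i : ℕ} (h₁ : j₁ + 1 ≤ i) (h₂ : i ≤ j₂ - 1) :
      u i = max (min (u (i-1)) (u (i+1)) + ε) ((u (i-1) + u (i+1)) / 2) ↔ ε ≤ |s| := by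
    obtain ⟨k, rfl⟩ : ∃ k, i = k + 1 := ⟨i - 1, by omega⟩
    have hprev : u k = u (k + 1) - s := by
      rw [hlin (k := k) (by omega) (by omega), hlin (k := k + 1) (by omega) (by omega)]
      push_cast; ring
    have hnext : u (k + 1 + 1) = u (k + 1) + s := by
      rw [hlin (k := k + 1) (by omega) (by omega), hlin (k := k + 1 + 1) (by omega) (by omega)]
      push_cast; ring
    rw [Nat.add_sub_cancel, hprev, hnext]
    exact max_min_add_midpoint_eq_iff _ _ _
  have hd : (0 : ℝ) < (j₂ : ℝ) - j₁ := sub_pos.2 (by exact_mod_cast (by omega : j₁ < j₂))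
  have hslope : ε ≤ |s| ↔ ε * ((j₂ : ℝ) - j₁) ≤ |FN - F0 + ((n : ℝ) + 1 - j₁ - j₂) * ε| := by
    rw [abs_div, abs_of_pos hd, le_div_iff₀ hd]
    ring_nf
  rw [← hslope]
  exact ⟨fun H => (hnode le_rfl (by omega)).1 (H _ le_rfl (by omega)),
    fun h i h₁ h₂ => (hnode h₁ h₂).2 h⟩

theorem stmt_13 (n : ℕ) (hn : 2 ≤ n) (ε : ℝ) (hε : 0 < ε) (F0 FN : ℝ) (hF : F0 ≤ FN)
    (j₁ j₂ : ℕ) (hj : j₁ < j₂) (hj2 : j₂ ≤ n + 1) (hgap : j₁ + 2 ≤ j₂)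
    (u : ℕ → ℝ)
    (hu1 : ∀ i ≤ j₁, u i = F0 + (i:ℝ) * ε)
    (hu2 : ∀ i, j₁ < i → i < j₂ →
      u i = (((j₂:ℝ) - i) / ((j₂:ℝ) - j₁)) * (F0 + (j₁:ℝ) * ε)
          + (((i:ℝ) - j₁) / ((j₂:ℝ) - j₁)) * (FN + ((n:ℝ) + 1 - j₂) * ε))
    (hu3 : ∀ i, j₂ ≤ i → i ≤ n + 1 → u i = FN + ((n:ℝ) + 1 - i) * ε) :
    (∀ i, j₁ + 1 ≤ i → i ≤ j₂ - 1 →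
      u i = max (min (u (i-1)) (u (i+1)) + ε) ((u (i-1) + u (i+1)) / 2))
    ↔ ε * ((j₂:ℝ) - j₁) ≤ |FN - F0 + ((n:ℝ) + 1 - j₁ - j₂) * ε| :=
  stmt_13_general n ε F0 FN j₁ j₂ hj2 hgap u hu1 hu2 hu3
end

section
/- Let Ω ⊆ ℝ^d be open, x̂ ∈ Ω, φ : Ω → ℝ twice continuously differentiable with ∇φ(x̂) ≠ 0. Suppose (x_ε)_{ε>0} is a family of points in Ω with x_ε → x̂ as ε → 0, and for each small ε > 0 let x_ε^min be a point of the closed ball B̄_ε(x_ε) at which φ attains its minimum over B̄_ε(x_ε). Then x_ε^min = x_ε - ε(∇φ(x_ε)/|∇φ(x_ε)| + o(1)) as ε → 0; that is, (x_ε - x_ε^min)/ε converges to ∇φ(x̂)/|∇φ(x̂)|. -/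
/-!
Near `x₀` the derivative of `φ` is uniformly `δ`-close to `⟪g, ·⟫` with `g = ∇φ(x₀)`, so by the mean
value inequality `φ` is `⟪g, ·⟫` up to an error `δ‖·‖` on the balls `B̄_ε(x_ε)`. Comparing the
minimizer with the point `x_ε - ε g / ‖g‖` of the ball gives `⟪g, x_ε - x_ε^min⟫ ≥ ε (‖g‖ - 2δ)`;
since also `‖x_ε - x_ε^min‖ ≤ ε`, the vector `(x_ε - x_ε^min) / ε` of the unit ball is within
`2 √(δ / ‖g‖)` of the unit vector `g / ‖g‖`.
-/

open Filter Metric InnerProductSpace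

open scoped RealInnerProductSpace Topology

section MinimizerOnBall

variable {E : Type*} [NormedAddCommGroup E] [InnerProductSpace ℝ E]

lemma norm_sub_sq_le_two_mul_one_sub_inner {u v : E} (hv : ‖v‖ ≤ 1) (hu : ‖u‖ = 1) :
    ‖v - u‖ ^ 2 ≤ 2 * (1 - ⟪v, u⟫) := by
  rw [norm_sub_sq_real, hu]
  nlinarith [norm_nonneg v]

lemma inner_sub_le_of_isMinOn [CompleteSpace E] {φ : E → ℝ} {φ' : E → StrongDual ℝ E}
    {s : Set E} {g xm y : E} {δ : ℝ} (hs : Convex ℝ s)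
    (hφ : ∀ z ∈ s, HasFDerivWithinAt φ (φ' z) s z) (hφ' : ∀ z ∈ s, ‖φ' z - toDual ℝ E g‖ ≤ δ)
    (hxm : xm ∈ s) (hmin : IsMinOn φ s xm) (hy : y ∈ s) : ⟪g, xm - y⟫ ≤ δ * ‖xm - y‖ := by
  have hmv := hs.norm_image_sub_le_of_norm_hasFDerivWithin_le' hφ hφ' hy hxm
  rw [toDual_apply_apply] at hmv
  have hle : φ xm ≤ φ y := hmin hy
  linarith [(abs_le.1 (Real.norm_eq_abs _ ▸ hmv)).1]

lemma dist_smul_sub_le_of_isMinOn_closedBall [CompleteSpace E] {φ : E → ℝ}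
    {φ' : E → StrongDual ℝ E} {g c xm : E} {ε δ : ℝ} (hg : g ≠ 0) (hε : 0 < ε)
    (hφ : ∀ z ∈ closedBall c ε, HasFDerivWithinAt φ (φ' z) (closedBall c ε) z)
    (hφ' : ∀ z ∈ closedBall c ε, ‖φ' z - toDual ℝ E g‖ ≤ δ) (hxm : xm ∈ closedBall c ε)
    (hmin : IsMinOn φ (closedBall c ε) xm) :
    dist (ε⁻¹ • (c - xm)) (‖g‖⁻¹ • g) ^ 2 ≤ 4 * δ / ‖g‖ := by
  have hg₀ : 0 < ‖g‖ := norm_pos_iff.2 hg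
  set u := ‖g‖⁻¹ • g
  have hu : ‖u‖ = 1 := by simp [u, norm_smul, hg₀.ne']
  have hxm' : ‖c - xm‖ ≤ ε := by rwa [← dist_eq_norm, dist_comm]
  -- compare with the point of the sphere lying in the direction of steepest descent
  have hy : c - ε • u ∈ closedBall c ε := by simp [norm_smul, hu, abs_of_pos hε]
  have hdesc := inner_sub_le_of_isMinOn (convex_closedBall c ε) hφ hφ' hxm hmin hy
  have hlen : ‖xm - (c - ε • u)‖ ≤ 2 * ε := by
    calc ‖xm - (c - ε • u)‖ ≤ ‖xm - c‖ + ‖ε • u‖ := by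
          rw [sub_sub_eq_add_sub, add_sub_right_comm]; exact norm_add_le _ _
      _ ≤ 2 * ε := by rw [norm_sub_rev, norm_smul, hu, Real.norm_of_nonneg hε.le]; linarith
  have hgu : ⟪g, u⟫ = ‖g‖ := by
    rw [real_inner_smul_right, real_inner_self_eq_norm_mul_norm, ← mul_assoc,
      inv_mul_cancel₀ hg₀.ne', one_mul]
  have hinner : ε * ‖g‖ - 2 * δ * ε ≤ ⟪g, c - xm⟫ := by
    have : ⟪g, xm - (c - ε • u)⟫ = ε * ‖g‖ - ⟪g, c - xm⟫ := by
      rw [← sub_add, inner_add_right, inner_sub_right, inner_sub_right, real_inner_smul_right, hgu]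
      ring
    have hδ : 0 ≤ δ := (norm_nonneg _).trans (hφ' xm hxm)
    linarith [hdesc.trans (mul_le_mul_of_nonneg_left hlen hδ)]
  have hv : ‖ε⁻¹ • (c - xm)‖ ≤ 1 := by
    rw [norm_smul, norm_inv, Real.norm_of_nonneg hε.le, inv_mul_le_iff₀ hε]; linarith
  have hvu : 1 - 2 * δ / ‖g‖ ≤ ⟪ε⁻¹ • (c - xm), u⟫ := by
    rw [real_inner_smul_left, real_inner_smul_right, real_inner_comm, le_inv_mul_iff₀ hε,
      le_inv_mul_iff₀ hg₀]
    calc ‖g‖ * (ε * (1 - 2 * δ / ‖g‖)) = ε * ‖g‖ - 2 * δ * ε := by field_simp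
      _ ≤ ⟪g, c - xm⟫ := hinner
  calc dist (ε⁻¹ • (c - xm)) u ^ 2 ≤ 2 * (1 - ⟪ε⁻¹ • (c - xm), u⟫) := by
        rw [dist_eq_norm]; exact norm_sub_sq_le_two_mul_one_sub_inner hv hu
    _ = 4 * δ / ‖g‖ - 2 * (⟪ε⁻¹ • (c - xm), u⟫ - (1 - 2 * δ / ‖g‖)) := by ring
    _ ≤ 4 * δ / ‖g‖ := by linarith

end MinimizerOnBall

lemma eventually_closedBall_subset_of_tendsto {α X : Type*} [PseudoMetricSpace X] {l : Filter α}
    {x : α → X} {r : α → ℝ} {x₀ : X} {U : Set X} (hx : Tendsto x l (𝓝 x₀))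
    (hr : Tendsto r l (𝓝 0)) (hU : U ∈ 𝓝 x₀) : ∀ᶠ a in l, closedBall (x a) (r a) ⊆ U := by
  have hR : Tendsto (fun a => r a + dist (x a) x₀) l (𝓝 0) := by
    simpa using hr.add (tendsto_iff_dist_tendsto_zero.1 hx)
  exact (hR.eventually (eventually_closedBall_subset hU)).mono fun a ha =>
    (closedBall_subset_closedBall' le_rfl).trans ha

theorem stmt_14_general (d : ℕ) (Ω : Set (EuclideanSpace ℝ (Fin d))) (hΩ : IsOpen Ω)
    (x₀ : EuclideanSpace ℝ (Fin d)) (hx₀ : x₀ ∈ Ω)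
    (φ : EuclideanSpace ℝ (Fin d) → ℝ) (hφ : ContDiffOn ℝ 2 φ Ω)
    (hgrad : gradient φ x₀ ≠ 0)
    (x : ℝ → EuclideanSpace ℝ (Fin d))
    (hxlim : Tendsto x (nhdsWithin (0:ℝ) (Set.Ioi 0)) (nhds x₀))
    (xmin : ℝ → EuclideanSpace ℝ (Fin d))
    (hmin : ∀ᶠ ε in nhdsWithin (0:ℝ) (Set.Ioi 0),
      xmin ε ∈ closedBall (x ε) ε ∧ ∀ y ∈ closedBall (x ε) ε, φ (xmin ε) ≤ φ y) :
    Tendsto (fun ε : ℝ => ε⁻¹ • (x ε - xmin ε)) (nhdsWithin (0:ℝ) (Set.Ioi 0))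
      (nhds (‖gradient φ x₀‖⁻¹ • gradient φ x₀)) := by
  set g := gradient φ x₀
  have hg₀ : 0 < ‖g‖ := norm_pos_iff.2 hgrad
  have hcont : ContinuousAt (fderiv ℝ φ) x₀ :=
    ((hφ.contDiffAt (hΩ.mem_nhds hx₀)).fderiv_right (m := 1) (by norm_num)).continuousAt
  rw [Metric.tendsto_nhds]
  intro η hη
  set δ := ‖g‖ * η ^ 2 / 8
  have hU : Ω ∩ {z | ‖fderiv ℝ φ z - toDual ℝ _ g‖ ≤ δ} ∈ 𝓝 x₀ := by
    refine inter_mem (hΩ.mem_nhds hx₀) ?_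
    simp only [g, toDual_gradient, ← dist_eq_norm]
    exact hcont.eventually (closedBall_mem_nhds _ (by positivity))
  filter_upwards [eventually_closedBall_subset_of_tendsto hxlim
    (tendsto_id.mono_left nhdsWithin_le_nhds) hU, self_mem_nhdsWithin, hmin]
    with ε hball (hε : 0 < ε) ⟨hxm, hmin⟩
  have hφ' : ∀ z ∈ closedBall (x ε) ε,
      HasFDerivWithinAt φ (fderiv ℝ φ z) (closedBall (x ε) ε) z := fun z hz =>
    ((hφ.differentiableOn (by norm_num) z (hball hz).1).differentiableAt
      (hΩ.mem_nhds (hball hz).1)).hasFDerivAt.hasFDerivWithinAt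
  have hdist := dist_smul_sub_le_of_isMinOn_closedBall hgrad hε hφ' (fun z hz => (hball hz).2)
    hxm hmin
  have hδ : 4 * δ / ‖g‖ = η ^ 2 / 2 := by simp only [δ]; field_simp; ring
  rw [hδ] at hdist
  nlinarith [dist_nonneg (x := ε⁻¹ • (x ε - xmin ε)) (y := ‖g‖⁻¹ • g)]

theorem stmt_14 (d : ℕ) (Ω : Set (EuclideanSpace ℝ (Fin d))) (hΩ : IsOpen Ω)
    (x₀ : EuclideanSpace ℝ (Fin d)) (hx₀ : x₀ ∈ Ω)
    (φ : EuclideanSpace ℝ (Fin d) → ℝ) (hφ : ContDiffOn ℝ 2 φ Ω)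
    (hgrad : gradient φ x₀ ≠ 0)
    (x : ℝ → EuclideanSpace ℝ (Fin d))
    (hxΩ : ∀ᶠ ε in nhdsWithin (0:ℝ) (Set.Ioi 0), x ε ∈ Ω)
    (hxlim : Tendsto x (nhdsWithin (0:ℝ) (Set.Ioi 0)) (nhds x₀))
    (xmin : ℝ → EuclideanSpace ℝ (Fin d))
    (hball : ∀ᶠ ε in nhdsWithin (0:ℝ) (Set.Ioi 0), closedBall (x ε) ε ⊆ Ω)
    (hmin : ∀ᶠ ε in nhdsWithin (0:ℝ) (Set.Ioi 0),
      xmin ε ∈ closedBall (x ε) ε ∧ ∀ y ∈ closedBall (x ε) ε, φ (xmin ε) ≤ φ y) :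
    Tendsto (fun ε : ℝ => ε⁻¹ • (x ε - xmin ε)) (nhdsWithin (0:ℝ) (Set.Ioi 0))
      (nhds (‖gradient φ x₀‖⁻¹ • gradient φ x₀)) :=
  stmt_14_general d Ω hΩ x₀ hx₀ φ hφ hgrad x hxlim xmin hmin
end

section
/- Let n ≥ 2, ε > 0, and integers k, j₂ with j₂ = k+1, 1 ≤ k ≤ n-1. Suppose F_{n+1} = F₀ + (2j₂ - n - 1)ε. Define u : {0,...,n+1} → ℝ by u i = F₀ + iε for 0 ≤ i ≤ j₂ - 1 and u i = F_{n+1} + (n+1-i)ε for j₂ ≤ i ≤ n+1. Then u is well defined (the two formulas agree where both ranges could apply after the identity is used), u 0 = F₀, u (n+1) = F_{n+1}, and u solves the DPP u i = max(min(u (i-1), u (i+1)) + ε, (u (i-1)+u (i+1))/2) for all 1 ≤ i ≤ n. -/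
/-! The data force `u i = F₀ + ε (j₂ - |i - j₂|)` on `{0, …, n+1}`: the relation between `F₀` and
`F_{n+1}` is exactly what makes the two formulas meet at the peak `j₂`. A lattice tent with slope
`ε ≥ 0` satisfies the DPP everywhere: on either slope both the min-term and the average equal the
middle value, and at the peak the min-term does while the average lies `ε` below. -/

def tent (c ε : ℝ) (p i : ℤ) : ℝ := c - ε * |((i - p : ℤ) : ℝ)|

theorem tent_eq_max_min_add (c ε : ℝ) (hε : 0 ≤ ε) (p i : ℤ) :
    tent c ε p i = max (min (tent c ε p (i - 1)) (tent c ε p (i + 1)) + ε)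
      ((tent c ε p (i - 1) + tent c ε p (i + 1)) / 2) := by
  unfold tent
  rcases lt_trichotomy i p with h | rfl | h
  · have h' : ((i - p : ℤ) : ℝ) ≤ -1 := by exact_mod_cast (by omega : i - p ≤ -1)
    push_cast at h' ⊢
    rw [abs_of_neg (by linarith), abs_of_neg (by linarith), abs_of_nonpos (by linarith),
      min_eq_left (by nlinarith)]
    ring_nf
    exact (max_self _).symm
  · norm_num [hε]
  · have h' : (1 : ℝ) ≤ ((i - p : ℤ) : ℝ) := by exact_mod_cast (by omega : 1 ≤ i - p)
    push_cast at h' ⊢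
    rw [abs_of_pos (by linarith), abs_of_nonneg (by linarith), abs_of_pos (by linarith),
      min_eq_right (by nlinarith)]
    ring_nf
    exact (max_self _).symm

theorem stmt_19_general (n : ℕ) (ε : ℝ) (hε : 0 < ε)
    (k j₂ : ℕ) (hj₂ : j₂ = k + 1) (hk2 : k ≤ n - 1)
    (F0 FN : ℝ) (hFN : FN = F0 + (2 * (j₂:ℝ) - n - 1) * ε)
    (u : ℕ → ℝ)
    (hu1 : ∀ i < j₂, u i = F0 + (i:ℝ) * ε)
    (hu2 : ∀ i, j₂ ≤ i → i ≤ n + 1 → u i = FN + ((n:ℝ) + 1 - i) * ε) :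
    u 0 = F0 ∧ u (n+1) = FN ∧
    ∀ i, 1 ≤ i → i ≤ n →
      u i = max (min (u (i-1)) (u (i+1)) + ε) ((u (i-1) + u (i+1)) / 2) := by
  have hu_tent : ∀ i ≤ n + 1, u i = tent (F0 + j₂ * ε) ε j₂ i := by
    intro i hi
    unfold tent
    push_cast
    rcases lt_or_ge i j₂ with h | h
    · have h' : (i : ℝ) < j₂ := by exact_mod_cast h
      rw [hu1 i h, abs_of_neg (by linarith)]
      ring
    · have h' : (j₂ : ℝ) ≤ i := by exact_mod_cast h
      rw [hu2 i h hi, hFN, abs_of_nonneg (by linarith)]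
      ring
  refine ⟨?_, ?_, fun i h1 hle => ?_⟩
  · rw [hu_tent 0 (by omega), tent]
    push_cast
    rw [zero_sub, abs_neg, abs_of_nonneg (by positivity)]
    ring
  · rw [hu_tent (n + 1) le_rfl, tent, hFN]
    have : (j₂ : ℝ) ≤ n + 1 := by exact_mod_cast (by omega : j₂ ≤ n + 1)
    push_cast
    rw [abs_of_nonneg (by linarith)]
    ring
  · rw [hu_tent i (by omega), hu_tent (i - 1) (by omega), hu_tent (i + 1) (by omega), Nat.cast_sub h1]
    push_cast
    exact tent_eq_max_min_add _ _ hε.le _ _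

theorem stmt_19 (n : ℕ) (hn : 2 ≤ n) (ε : ℝ) (hε : 0 < ε)
    (k j₂ : ℕ) (hj₂ : j₂ = k + 1) (hk1 : 1 ≤ k) (hk2 : k ≤ n - 1)
    (F0 FN : ℝ) (hFN : FN = F0 + (2 * (j₂:ℝ) - n - 1) * ε)
    (u : ℕ → ℝ)
    (hu1 : ∀ i < j₂, u i = F0 + (i:ℝ) * ε)
    (hu2 : ∀ i, j₂ ≤ i → i ≤ n + 1 → u i = FN + ((n:ℝ) + 1 - i) * ε) :
    u 0 = F0 ∧ u (n+1) = FN ∧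
    ∀ i, 1 ≤ i → i ≤ n →
      u i = max (min (u (i-1)) (u (i+1)) + ε) ((u (i-1) + u (i+1)) / 2) :=
  stmt_19_general n ε hε k j₂ hj₂ hk2 F0 FN hFN u hu1 hu2
end
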